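/- arXiv:1010.0737 — 2 statements merged into one kernel-verified Lean document; each statement's English description precedes it below -/
import Mathlib

section
/- For all α > 0 and all integers q ≥ 1, the infimum of ∫_ℝ (q|φ'|² − αq²|φ|⁴) dx over real-valued φ ∈ H¹(ℝ) with ‖φ‖_{L²} = 1 equals −α²q³/12. -/
/-!
Completing the square. For normalized `φ` let `w x = 1 - 2 ∫_{-∞}^x φ²` (`signedMass φ`), so that
`w' = -2φ²` and `w` decreases from `1` to `-1`. Integrating by parts gives `∫ φ φ' w = ∫ φ⁴` and
`∫ w² φ² = 1/3`, hence with `c = αq/2`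
  `∫ (q φ'² - αq² φ⁴) = q ∫ (φ' - c w φ)² - α²q³/12 ≥ -α²q³/12`.
Equality holds when `φ' = c w φ`, which is solved by the soliton `φ = √(c/2) sech (c x)`,
for which `w = -tanh (c x)`.
-/

open MeasureTheory Real

open Filter Set Topology

section RealLine

variable {f g g' : ℝ → ℝ}

theorem integrable_of_hasDerivAt_of_nonneg {m n : ℝ} (hderiv : ∀ x, HasDerivAt g (g' x) x)
    (hg' : Continuous g') (hpos : ∀ x, 0 ≤ g' x) (hbot : Tendsto g atBot (𝓝 m))
    (htop : Tendsto g atTop (𝓝 n)) : Integrable g' := by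
  have hcover : AECover volume atTop fun i : ℝ => Ioc (-i) i :=
    aecover_Ioc tendsto_neg_atTop_atBot tendsto_id
  refine hcover.integrable_of_integral_tendsto_of_nonneg_ae (n - m)
    (fun i => hg'.integrableOn_Icc.mono_set Ioc_subset_Icc_self) (ae_of_all _ hpos) ?_
  have hftc : ∀ᶠ i in atTop, g i - g (-i) = ∫ x in Ioc (-i) i, g' x := by
    filter_upwards [eventually_ge_atTop 0] with i hi
    rw [← intervalIntegral.integral_of_le (by simp; linarith),
      intervalIntegral.integral_eq_sub_of_hasDerivAt (fun x _ => hderiv x)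
        (hg'.intervalIntegrable _ _)]
  exact (htop.sub (hbot.comp tendsto_neg_atTop_atBot)).congr' hftc

theorem le_integral_abs_of_hasDerivAt (hderiv : ∀ x, HasDerivAt g (g' x) x) (hg' : Integrable g')
    (hbot : Tendsto g atBot (𝓝 0)) (x : ℝ) : g x ≤ ∫ t, |g' t| :=
  calc g x = ∫ t in Iic x, g' t := by
        rw [integral_Iic_of_hasDerivAt_of_tendsto' (fun t _ => hderiv t) hg'.integrableOn hbot,
          sub_zero]
    _ ≤ ∫ t in Iic x, |g' t| :=
        setIntegral_mono hg'.integrableOn hg'.abs.integrableOn fun t => le_abs_self _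
    _ ≤ ∫ t, |g' t| := setIntegral_le_integral hg'.abs (ae_of_all _ fun t => abs_nonneg _)

theorem hasDerivAt_integral_Iic (hf : Continuous f) (hfi : Integrable f) (x : ℝ) :
    HasDerivAt (fun y => ∫ t in Iic y, f t) (f x) x := by
  have hsplit :
      (fun y => ∫ t in Iic y, f t) = fun y => (∫ t in Iic 0, f t) + ∫ t in 0..y, f t := by
    funext y
    rw [← intervalIntegral.integral_Iic_sub_Iic hfi.integrableOn hfi.integrableOn]
    ring
  rw [hsplit]
  exact (hf.integral_hasStrictDerivAt 0 x).hasDerivAt.const_add _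

theorem tendsto_integral_Iic_atTop (hf : Integrable f) :
    Tendsto (fun y => ∫ t in Iic y, f t) atTop (𝓝 (∫ t, f t)) :=
  (aecover_Iic tendsto_id).integral_tendsto_of_countably_generated hf

end RealLine

theorem hasDerivAt_tanh (x : ℝ) : HasDerivAt tanh (1 / cosh x ^ 2) x := by
  have h := (hasDerivAt_sinh x).div (hasDerivAt_cosh x) (cosh_pos x).ne'
  rw [← sq, ← sq, cosh_sq_sub_sinh_sq] at h
  exact h.congr_of_eventuallyEq (Eventually.of_forall fun y => tanh_eq_sinh_div_cosh y)

theorem tanh_eq_one_sub (x : ℝ) : tanh x = 1 - 2 / (exp (2 * x) + 1) := by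
  rw [tanh_eq, exp_neg, show 2 * x = x + x by ring, exp_add]
  have := exp_pos x
  field_simp
  ring

theorem tendsto_tanh_atTop : Tendsto tanh atTop (𝓝 1) := by
  have hexp : Tendsto (fun x => exp (2 * x) + 1) atTop atTop :=
    tendsto_atTop_add_const_right _ _
      (tendsto_exp_atTop.comp (tendsto_id.const_mul_atTop two_pos))
  simpa [← tanh_eq_one_sub] using (tendsto_const_nhds (x := (2:ℝ))).div_atTop hexp |>.const_sub 1

theorem tendsto_tanh_atBot : Tendsto tanh atBot (𝓝 (-1)) := by
  simpa [Function.comp_def] using (tendsto_tanh_atTop.comp tendsto_neg_atBot_atTop).neg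

noncomputable def signedMass (φ : ℝ → ℝ) (x : ℝ) : ℝ := 1 - 2 * ∫ t in Iic x, φ t ^ 2

section SignedMass

variable {φ : ℝ → ℝ}

theorem hasDerivAt_signedMass (hφ : Continuous φ) (hφ2 : Integrable fun x => φ x ^ 2) (x : ℝ) :
    HasDerivAt (signedMass φ) (-(2 * φ x ^ 2)) x :=
  ((hasDerivAt_integral_Iic (hφ.pow 2) hφ2 x).const_mul 2).const_sub 1

theorem tendsto_signedMass_atBot : Tendsto (signedMass φ) atBot (𝓝 1) := by
  have h := ((tendsto_integral_Iic_zero (f := fun t => φ t ^ 2) (μ := volume)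
    tendsto_id).const_mul 2).const_sub 1
  rwa [mul_zero, sub_zero] at h

theorem tendsto_signedMass_atTop (hφ2 : Integrable fun x => φ x ^ 2)
    (hnorm : ∫ x, φ x ^ 2 = 1) : Tendsto (signedMass φ) atTop (𝓝 (-1)) := by
  have h := ((tendsto_integral_Iic_atTop hφ2).const_mul 2).const_sub 1
  norm_num [hnorm] at h
  exact h

theorem abs_signedMass_le_one (hφ2 : Integrable fun x => φ x ^ 2)
    (hnorm : ∫ x, φ x ^ 2 = 1) (x : ℝ) : |signedMass φ x| ≤ 1 := by
  have h0 : 0 ≤ ∫ t in Iic x, φ t ^ 2 := setIntegral_nonneg measurableSet_Iic fun t _ => sq_nonneg _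
  have h1 : ∫ t in Iic x, φ t ^ 2 ≤ 1 :=
    hnorm ▸ setIntegral_le_integral hφ2 (ae_of_all _ fun t => sq_nonneg _)
  rw [signedMass, abs_le]
  constructor <;> linarith

end SignedMass

section FiniteEnergy

variable {φ : ℝ → ℝ}

theorem hasDerivAt_sq_of_differentiable (hφ : Differentiable ℝ φ) (x : ℝ) :
    HasDerivAt (fun y => φ y ^ 2) (2 * (φ x * deriv φ x)) x :=
  ((hφ x).hasDerivAt.pow 2).congr_deriv (by ring)

theorem tendsto_sq_atBot_zero (hφ : Differentiable ℝ φ) (hφ2 : MemLp φ 2)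
    (hφ'2 : MemLp (deriv φ) 2) : Tendsto (fun x => φ x ^ 2) atBot (𝓝 0) :=
  tendsto_zero_of_hasDerivAt_of_integrableOn_Iic (a := 0)
    (fun x _ => hasDerivAt_sq_of_differentiable hφ x)
    ((hφ2.integrable_mul hφ'2).const_mul 2).integrableOn hφ2.integrable_sq.integrableOn

theorem tendsto_sq_atTop_zero (hφ : Differentiable ℝ φ) (hφ2 : MemLp φ 2)
    (hφ'2 : MemLp (deriv φ) 2) : Tendsto (fun x => φ x ^ 2) atTop (𝓝 0) :=
  tendsto_zero_of_hasDerivAt_of_integrableOn_Ioi (a := 0)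
    (fun x _ => hasDerivAt_sq_of_differentiable hφ x)
    ((hφ2.integrable_mul hφ'2).const_mul 2).integrableOn hφ2.integrable_sq.integrableOn

theorem integrable_pow_four (hφ : Differentiable ℝ φ) (hφ2 : MemLp φ 2)
    (hφ'2 : MemLp (deriv φ) 2) : Integrable fun x => φ x ^ 4 := by
  have hbound : ∀ x, ‖φ x ^ 2‖ ≤ ∫ t, |2 * (φ t * deriv φ t)| := fun x => by
    rw [norm_of_nonneg (sq_nonneg _)]
    exact le_integral_abs_of_hasDerivAt (hasDerivAt_sq_of_differentiable hφ)
      ((hφ2.integrable_mul hφ'2).const_mul 2) (tendsto_sq_atBot_zero hφ hφ2 hφ'2) x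
  refine (hφ2.integrable_sq.bdd_mul ((hφ.continuous.pow 2).aestronglyMeasurable)
    (ae_of_all _ hbound)).congr (ae_of_all _ fun x => ?_)
  simp only [Pi.pow_apply]
  ring

end FiniteEnergy

section CompletingTheSquare

variable {φ : ℝ → ℝ}

theorem integrable_mul_deriv_mul_signedMass (hφ : Differentiable ℝ φ) (hφ2 : MemLp φ 2)
    (hφ'2 : MemLp (deriv φ) 2) (hnorm : ∫ x, φ x ^ 2 = 1) :
    Integrable fun x => φ x * deriv φ x * signedMass φ x :=
  (hφ2.integrable_mul hφ'2).mul_bdd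
    (continuous_iff_continuousAt.2 fun x =>
      (hasDerivAt_signedMass hφ.continuous hφ2.integrable_sq x).continuousAt).aestronglyMeasurable
    (ae_of_all _ (abs_signedMass_le_one hφ2.integrable_sq hnorm))

theorem integrable_signedMass_sq_mul_sq (hφ : Continuous φ) (hφ2 : MemLp φ 2)
    (hnorm : ∫ x, φ x ^ 2 = 1) : Integrable fun x => signedMass φ x ^ 2 * φ x ^ 2 :=
  hφ2.integrable_sq.bdd_mul
    ((continuous_iff_continuousAt.2 fun x =>
      (hasDerivAt_signedMass hφ hφ2.integrable_sq x).continuousAt).pow 2).aestronglyMeasurable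
    (ae_of_all _ fun x => by
      rw [norm_pow, Real.norm_eq_abs]
      exact pow_le_one₀ (abs_nonneg _) (abs_signedMass_le_one hφ2.integrable_sq hnorm x))

theorem integral_mul_deriv_mul_signedMass (hφ : Differentiable ℝ φ) (hφ2 : MemLp φ 2)
    (hφ'2 : MemLp (deriv φ) 2) (hnorm : ∫ x, φ x ^ 2 = 1) :
    ∫ x, φ x * deriv φ x * signedMass φ x = ∫ x, φ x ^ 4 := by
  have hderiv : ∀ x, HasDerivAt (fun y => φ y ^ 2 * signedMass φ y / 2)
      (φ x * deriv φ x * signedMass φ x - φ x ^ 4) x := fun x =>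
    (((hasDerivAt_sq_of_differentiable hφ x).mul
      (hasDerivAt_signedMass hφ.continuous hφ2.integrable_sq x)).div_const 2).congr_deriv
        (by ring)
  have hbot : Tendsto (fun y => φ y ^ 2 * signedMass φ y / 2) atBot (𝓝 0) := by
    simpa using ((tendsto_sq_atBot_zero hφ hφ2 hφ'2).mul tendsto_signedMass_atBot).div_const 2
  have htop : Tendsto (fun y => φ y ^ 2 * signedMass φ y / 2) atTop (𝓝 0) := by
    simpa using ((tendsto_sq_atTop_zero hφ hφ2 hφ'2).mul
      (tendsto_signedMass_atTop hφ2.integrable_sq hnorm)).div_const 2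
  have hint4 := integrable_pow_four hφ hφ2 hφ'2
  have hftc := integral_of_hasDerivAt_of_tendsto hderiv
    ((integrable_mul_deriv_mul_signedMass hφ hφ2 hφ'2 hnorm).sub hint4) hbot htop
  rw [integral_sub (integrable_mul_deriv_mul_signedMass hφ hφ2 hφ'2 hnorm) hint4] at hftc
  linarith

theorem integral_signedMass_sq_mul_sq (hφ : Continuous φ) (hφ2 : MemLp φ 2)
    (hnorm : ∫ x, φ x ^ 2 = 1) : ∫ x, signedMass φ x ^ 2 * φ x ^ 2 = 1 / 3 := by
  have hderiv : ∀ x, HasDerivAt (fun y => -signedMass φ y ^ 3 / 6)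
      (signedMass φ x ^ 2 * φ x ^ 2) x := fun x =>
    (((hasDerivAt_signedMass hφ hφ2.integrable_sq x).pow 3).neg.div_const 6).congr_deriv
      (by ring)
  have hbot : Tendsto (fun y => -signedMass φ y ^ 3 / 6) atBot (𝓝 (-(1 ^ 3) / 6)) :=
    (tendsto_signedMass_atBot.pow 3).neg.div_const 6
  have htop : Tendsto (fun y => -signedMass φ y ^ 3 / 6) atTop (𝓝 (-(-1) ^ 3 / 6)) :=
    ((tendsto_signedMass_atTop hφ2.integrable_sq hnorm).pow 3).neg.div_const 6
  rw [integral_of_hasDerivAt_of_tendsto hderiv (integrable_signedMass_sq_mul_sq hφ hφ2 hnorm)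
    hbot htop]
  norm_num

theorem integral_deriv_sub_mul_signedMass_sq (hφ : Differentiable ℝ φ) (hφ2 : MemLp φ 2)
    (hφ'2 : MemLp (deriv φ) 2) (hnorm : ∫ x, φ x ^ 2 = 1) (c : ℝ) :
    ∫ x, (deriv φ x - c * signedMass φ x * φ x) ^ 2
      = (∫ x, deriv φ x ^ 2) - 2 * c * (∫ x, φ x ^ 4) + c ^ 2 / 3 := by
  have hA := hφ'2.integrable_sq
  have hB := (integrable_mul_deriv_mul_signedMass hφ hφ2 hφ'2 hnorm).const_mul (2 * c)
  have hC := (integrable_signedMass_sq_mul_sq hφ.continuous hφ2 hnorm).const_mul (c ^ 2)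
  have hAB : Integrable fun x =>
      deriv φ x ^ 2 - 2 * c * (φ x * deriv φ x * signedMass φ x) := hA.sub hB
  calc ∫ x, (deriv φ x - c * signedMass φ x * φ x) ^ 2
      = ∫ x, (deriv φ x ^ 2 - 2 * c * (φ x * deriv φ x * signedMass φ x)
          + c ^ 2 * (signedMass φ x ^ 2 * φ x ^ 2)) := by
        congr 1; funext x; ring
    _ = (∫ x, deriv φ x ^ 2) - 2 * c * (∫ x, φ x * deriv φ x * signedMass φ x)
          + c ^ 2 * ∫ x, signedMass φ x ^ 2 * φ x ^ 2 := by
        rw [integral_add hAB hC, integral_sub hA hB, integral_const_mul,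
          integral_const_mul]
    _ = _ := by
        rw [integral_mul_deriv_mul_signedMass hφ hφ2 hφ'2 hnorm,
          integral_signedMass_sq_mul_sq hφ.continuous hφ2 hnorm]
        ring

theorem pekar_energy_eq (hφ : Differentiable ℝ φ) (hφ2 : MemLp φ 2)
    (hφ'2 : MemLp (deriv φ) 2) (hnorm : ∫ x, φ x ^ 2 = 1) (α q : ℝ) :
    ∫ x, (q * deriv φ x ^ 2 - α * q ^ 2 * φ x ^ 4)
      = q * (∫ x, (deriv φ x - α * q / 2 * signedMass φ x * φ x) ^ 2) - α ^ 2 * q ^ 3 / 12 := by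
  rw [integral_deriv_sub_mul_signedMass_sq hφ hφ2 hφ'2 hnorm,
    integral_sub (hφ'2.integrable_sq.const_mul _) ((integrable_pow_four hφ hφ2 hφ'2).const_mul _),
    integral_const_mul, integral_const_mul]
  ring

end CompletingTheSquare

noncomputable def sechProfile (c x : ℝ) : ℝ := √(c / 2) / cosh (c * x)

section SechProfile

variable {c : ℝ}

theorem hasDerivAt_sechProfile (c x : ℝ) :
    HasDerivAt (sechProfile c) (-c * tanh (c * x) * sechProfile c x) x := by
  have h := (((hasDerivAt_id x).const_mul c).cosh.inv (cosh_pos _).ne').const_mul √(c / 2)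
  simp only [id_eq, mul_one] at h
  refine (h.congr_deriv ?_).congr_of_eventuallyEq
    (Eventually.of_forall fun y => div_eq_mul_inv _ _)
  rw [sechProfile, tanh_eq_sinh_div_cosh]
  field_simp

theorem sechProfile_sq (hc : 0 ≤ c) (x : ℝ) :
    sechProfile c x ^ 2 = c / 2 * (1 / cosh (c * x) ^ 2) := by
  rw [sechProfile, div_pow, sq_sqrt (by positivity)]
  ring

theorem hasDerivAt_tanh_mul_div_two (hc : 0 ≤ c) (x : ℝ) :
    HasDerivAt (fun y => tanh (c * y) / 2) (sechProfile c x ^ 2) x := by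
  refine (((hasDerivAt_tanh _).comp x ((hasDerivAt_id x).const_mul c)).div_const 2).congr_deriv
    ?_
  rw [sechProfile_sq hc]
  simp only [id_eq, one_div, mul_one]
  ring

theorem tendsto_tanh_mul_div_two_atBot (hc : 0 < c) :
    Tendsto (fun y => tanh (c * y) / 2) atBot (𝓝 (-1 / 2)) :=
  (tendsto_tanh_atBot.comp (tendsto_id.const_mul_atBot hc)).div_const 2

theorem tendsto_tanh_mul_div_two_atTop (hc : 0 < c) :
    Tendsto (fun y => tanh (c * y) / 2) atTop (𝓝 (1 / 2)) :=
  (tendsto_tanh_atTop.comp (tendsto_id.const_mul_atTop hc)).div_const 2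

theorem continuous_sechProfile (c : ℝ) : Continuous (sechProfile c) :=
  continuous_iff_continuousAt.2 fun x => (hasDerivAt_sechProfile c x).continuousAt

theorem integrable_sechProfile_sq (hc : 0 < c) : Integrable fun x => sechProfile c x ^ 2 :=
  integrable_of_hasDerivAt_of_nonneg (hasDerivAt_tanh_mul_div_two hc.le)
    ((continuous_sechProfile c).pow 2) (fun _ => sq_nonneg _)
    (tendsto_tanh_mul_div_two_atBot hc) (tendsto_tanh_mul_div_two_atTop hc)

theorem integral_sechProfile_sq (hc : 0 < c) : ∫ x, sechProfile c x ^ 2 = 1 := by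
  rw [integral_of_hasDerivAt_of_tendsto (hasDerivAt_tanh_mul_div_two hc.le)
    (integrable_sechProfile_sq hc) (tendsto_tanh_mul_div_two_atBot hc)
    (tendsto_tanh_mul_div_two_atTop hc)]
  norm_num

theorem signedMass_sechProfile (hc : 0 < c) (x : ℝ) :
    signedMass (sechProfile c) x = -tanh (c * x) := by
  rw [signedMass, integral_Iic_of_hasDerivAt_of_tendsto'
    (fun t _ => hasDerivAt_tanh_mul_div_two hc.le t) (integrable_sechProfile_sq hc).integrableOn
    (tendsto_tanh_mul_div_two_atBot hc)]
  ring

theorem memLp_sechProfile (hc : 0 < c) : MemLp (sechProfile c) 2 :=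
  (memLp_two_iff_integrable_sq (continuous_sechProfile c).aestronglyMeasurable).2
    (integrable_sechProfile_sq hc)

theorem deriv_sechProfile (hc : 0 < c) (x : ℝ) :
    deriv (sechProfile c) x = c * signedMass (sechProfile c) x * sechProfile c x := by
  rw [(hasDerivAt_sechProfile c x).deriv, signedMass_sechProfile hc]
  ring

theorem memLp_deriv_sechProfile (hc : 0 < c) : MemLp (deriv (sechProfile c)) 2 := by
  refine ((memLp_sechProfile hc).const_mul c).of_le (measurable_deriv _).aestronglyMeasurable
    (ae_of_all _ fun x => ?_)
  rw [deriv_sechProfile hc, signedMass_sechProfile hc, norm_mul, norm_mul, norm_mul, norm_neg]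
  exact mul_le_mul_of_nonneg_right (mul_le_of_le_one_right (norm_nonneg _)
    (abs_tanh_lt_one _).le) (norm_nonneg _)

end SechProfile

/-- The one-dimensional Pekar functional for a `q`-on:
the infimum of `∫ (q|φ'|² − αq²|φ|⁴)` over real-valued `φ ∈ H¹(ℝ)` with
`‖φ‖_{L²} = 1` equals `−α²q³/12`. -/
theorem qon_pekar_infimum (α : ℝ) (hα : 0 < α) (q : ℕ) (hq : 1 ≤ q) :
    sInf { E : ℝ | ∃ φ : ℝ → ℝ, Differentiable ℝ φ ∧
        MemLp φ 2 (volume : Measure ℝ) ∧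
        MemLp (deriv φ) 2 (volume : Measure ℝ) ∧
        (∫ x : ℝ, (φ x) ^ 2) = 1 ∧
        E = ∫ x : ℝ, ((q : ℝ) * (deriv φ x) ^ 2 - α * (q : ℝ) ^ 2 * (φ x) ^ 4) }
      = - α ^ 2 * (q : ℝ) ^ 3 / 12 := by
  have hq' : (0 : ℝ) < q := Nat.cast_pos.2 hq
  have hc : 0 < α * q / 2 := by positivity
  refine IsLeast.csInf_eq ⟨⟨sechProfile (α * q / 2),
    fun x => (hasDerivAt_sechProfile _ x).differentiableAt, memLp_sechProfile hc,
    memLp_deriv_sechProfile hc, integral_sechProfile_sq hc, ?_⟩, ?_⟩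
  · rw [pekar_energy_eq (fun x => (hasDerivAt_sechProfile _ x).differentiableAt)
      (memLp_sechProfile hc) (memLp_deriv_sechProfile hc) (integral_sechProfile_sq hc)]
    simp [deriv_sechProfile hc, neg_div]
  · rintro E ⟨φ, hφ, hφ2, hφ'2, hnorm, rfl⟩
    rw [pekar_energy_eq hφ hφ2 hφ'2 hnorm]
    have hsq : 0 ≤ ∫ x, (deriv φ x - α * q / 2 * signedMass φ x * φ x) ^ 2 :=
      integral_nonneg fun x => sq_nonneg _
    linarith [mul_nonneg hq'.le hsq]
end

section
/- Let ψ be a smooth, rapidly decaying function on ℝ^q (q particles in one dimension) with ∫|ψ|² = 1, and let ρ_ψ(x) = q ∫ |ψ(x₁,…,x_{q−1},x)|² dx₁⋯dx_{q−1} be its density (assuming ψ symmetric). Then ∑_{i=1}^q ∫_{ℝ^q} |∇_i ψ|² dx ≥ ∫_ℝ |(√ρ_ψ)'(x)|² dx, with equality when ψ(x₁,…,x_q) = ∏_i φ(x_i) with φ = √(ρ_ψ/q). -/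
/-!
By permutation symmetry the kinetic energy is `q ∫ |∂_q ψ|²`. Writing `A(x) = ∫ |ψ(y, x)|² dy`
and `B(x) = ∫ |∂_q ψ(y, x)|² dy`, we have `ρ = q A` and `A' = 2 ∫ ⟪ψ, ∂_q ψ⟫`, so Cauchy–Schwarz
gives `A'² ≤ 4 A B`, i.e. `((√ρ)')² ≤ q B` pointwise (where `A` vanishes, `√ρ` has a minimum).
Integrating in `x` gives the inequality. For a product `∏ φ(xᵢ)` with `φ ≥ 0` we get
`A = c^(q-1) φ²` and `B = c^(q-1) φ'²` with `c = ∫ φ²`, and the pointwise bound is an equality;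
`φ` is differentiable since, unless it vanishes, it is a multiple of a one-variable section of `ψ`.
-/

open MeasureTheory Real

/-- The one-particle density of a symmetric `q`-particle wave function in 1D,
`ρ_ψ(x) = q ∫ |ψ(x₁,…,x_{q−1},x)|² dx₁⋯dx_{q−1}`, with `q = m+1`. -/
noncomputable def densityHO (m : ℕ) (ψ : (Fin (m + 1) → ℝ) → ℂ) (x : ℝ) : ℝ :=
  (m + 1 : ℝ) * ∫ y : Fin m → ℝ, ‖ψ (Fin.snoc y x)‖ ^ 2

/-- The many-body kinetic energy `∑ᵢ ∫ |∂ᵢψ|²`. -/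
noncomputable def kineticHO (m : ℕ) (ψ : (Fin (m + 1) → ℝ) → ℂ) : ℝ :=
  ∑ i : Fin (m + 1), ∫ x : Fin (m + 1) → ℝ,
    ‖deriv (fun t : ℝ => ψ (Function.update x i t)) (x i)‖ ^ 2

open scoped LineDeriv SchwartzMap

section Permutation

variable {ι : Type*} [Fintype ι] {G : Type*} [NormedAddCommGroup G] [NormedSpace ℝ G]

theorem integral_comp_perm (σ : Equiv.Perm ι) (g : (ι → ℝ) → G) :
    ∫ x, g (x ∘ σ) = ∫ x, g x := by
  rw [← (volume_measurePreserving_piCongrLeft (fun _ : ι => ℝ) σ.symm).integral_comp' g]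
  congr with x
  simp [MeasurableEquiv.piCongrLeft, Equiv.piCongrLeft, Equiv.piCongrLeft', Function.comp_def]

end Permutation

section Snoc

variable {m : ℕ}

theorem norm_le_norm_finSnoc (y : Fin m → ℝ) (x : ℝ) :
    ‖y‖ ≤ ‖(Fin.snoc y x : Fin (m + 1) → ℝ)‖ :=
  (pi_norm_le_iff_of_nonneg (norm_nonneg _)).2 fun i => by
    simpa using norm_le_pi_norm (Fin.snoc y x : Fin (m + 1) → ℝ) i.castSucc

theorem continuous_finSnoc_left (x : ℝ) :
    Continuous fun y : Fin m → ℝ => (Fin.snoc y x : Fin (m + 1) → ℝ) :=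
  continuous_id.finSnoc (A := fun _ => ℝ) continuous_const

theorem hasDerivAt_finSnoc (y : Fin m → ℝ) (t : ℝ) :
    HasDerivAt (fun s : ℝ => (Fin.snoc y s : Fin (m + 1) → ℝ)) (Pi.single (Fin.last m) 1) t := by
  convert hasDerivAt_update (Fin.snoc y 0 : Fin (m + 1) → ℝ) (Fin.last m) t using 1
  funext s
  rw [Fin.update_snoc_last]

theorem finSnoc_eq_piFinSuccAbove_symm :
    (fun p : ℝ × (Fin m → ℝ) => (Fin.snoc p.2 p.1 : Fin (m + 1) → ℝ))
      = (MeasurableEquiv.piFinSuccAbove (fun _ => ℝ) (Fin.last m)).symm := by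
  ext p : 1
  simp [MeasurableEquiv.piFinSuccAbove, Fin.insertNthEquiv, Fin.insertNth_last']

variable {G : Type*} [NormedAddCommGroup G]

theorem integrable_finSnoc_prod {g : (Fin (m + 1) → ℝ) → G} (hg : Integrable g) :
    Integrable (fun p : ℝ × (Fin m → ℝ) => g (Fin.snoc p.2 p.1)) (volume.prod volume) := by
  have h := (volume_preserving_piFinSuccAbove (fun _ : Fin (m + 1) => ℝ) (Fin.last m)).symm
  rw [← Measure.volume_eq_prod, ← Function.comp_def g, finSnoc_eq_piFinSuccAbove_symm]
  exact (h.integrable_comp_emb (MeasurableEquiv.measurableEmbedding _)).2 hg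

theorem integral_eq_integral_integral_finSnoc [NormedSpace ℝ G] {g : (Fin (m + 1) → ℝ) → G}
    (hg : Integrable g) :
    ∫ z, g z = ∫ x, ∫ y : Fin m → ℝ, g (Fin.snoc y x) := by
  have h := (volume_preserving_piFinSuccAbove (fun _ : Fin (m + 1) => ℝ) (Fin.last m)).symm
  rw [← h.integral_comp', ← finSnoc_eq_piFinSuccAbove_symm, Measure.volume_eq_prod]
  exact integral_prod _ (integrable_finSnoc_prod hg)

end Snoc

theorem kineticHO_eq_of_symm {m : ℕ} {ψ : (Fin (m + 1) → ℝ) → ℂ}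
    (hsymm : ∀ (p : Equiv.Perm (Fin (m + 1))) (x : Fin (m + 1) → ℝ), ψ (x ∘ p) = ψ x) :
    kineticHO m ψ = (m + 1) * ∫ x : Fin (m + 1) → ℝ,
      ‖deriv (fun t : ℝ => ψ (Function.update x (Fin.last m) t)) (x (Fin.last m))‖ ^ 2 := by
  have hterm (i : Fin (m + 1)) :
      ∫ x : Fin (m + 1) → ℝ, ‖deriv (fun t : ℝ => ψ (Function.update x i t)) (x i)‖ ^ 2
        = ∫ x : Fin (m + 1) → ℝ,
          ‖deriv (fun t : ℝ => ψ (Function.update x (Fin.last m) t)) (x (Fin.last m))‖ ^ 2 := by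
    set σ := Equiv.swap i (Fin.last m)
    rw [← integral_comp_perm σ (fun x : Fin (m + 1) → ℝ =>
      ‖deriv (fun t : ℝ => ψ (Function.update x (Fin.last m) t)) (x (Fin.last m))‖ ^ 2)]
    congr with x
    have hψ (t : ℝ) : ψ (Function.update x i t) = ψ (Function.update (x ∘ σ) (Fin.last m) t) := by
      rw [← hsymm σ, Function.update_comp_equiv, Equiv.symm_swap, Equiv.swap_apply_left]
    simp only [hψ, Function.comp_apply, σ, Equiv.swap_apply_right]
  simp only [kineticHO, hterm, Finset.sum_const, Finset.card_univ, Fintype.card_fin, nsmul_eq_mul]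
  push_cast
  ring

section CauchySchwarz

variable {α : Type*} [MeasurableSpace α] {μ : Measure α} {F : Type*} [NormedAddCommGroup F]
  [InnerProductSpace ℝ F]

open scoped RealInnerProductSpace in
theorem sq_integral_inner_le {f g : α → F} (hf : Integrable (fun a => ‖f a‖ ^ 2) μ)
    (hg : Integrable (fun a => ‖g a‖ ^ 2) μ) (hfg : Integrable (fun a => ⟪f a, g a⟫) μ) :
    (∫ a, ⟪f a, g a⟫ ∂μ) ^ 2 ≤ (∫ a, ‖f a‖ ^ 2 ∂μ) * ∫ a, ‖g a‖ ^ 2 ∂μ := by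
  have hquad (t : ℝ) : ∫ a, ‖f a + t • g a‖ ^ 2 ∂μ
      = (∫ a, ‖g a‖ ^ 2 ∂μ) * (t * t) + (2 * ∫ a, ⟪f a, g a⟫ ∂μ) * t + ∫ a, ‖f a‖ ^ 2 ∂μ := by
    have hexp (a : α) : ‖f a + t • g a‖ ^ 2
        = ‖f a‖ ^ 2 + 2 * t * ⟪f a, g a⟫ + t * t * ‖g a‖ ^ 2 := by
      rw [norm_add_sq_real, inner_smul_right, norm_smul, mul_pow, Real.norm_eq_abs, sq_abs]
      ring
    simp_rw [hexp]
    rw [integral_add _ (hg.const_mul _), integral_add hf (hfg.const_mul _), integral_const_mul,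
      integral_const_mul]
    · ring
    · exact hf.add (hfg.const_mul _)
  have hdiscrim := discrim_le_zero fun t => (hquad t).symm ▸ integral_nonneg fun a => sq_nonneg _
  rw [discrim] at hdiscrim
  nlinarith

end CauchySchwarz

theorem sq_deriv_sqrt_le {A : ℝ → ℝ} {D B x : ℝ} (hA : ∀ t, 0 ≤ A t) (hD : HasDerivAt A D x)
    (hB : 0 ≤ B) (hDB : D ^ 2 ≤ 4 * A x * B) : deriv (fun t => √(A t)) x ^ 2 ≤ B := by
  rcases (hA x).eq_or_lt with hAx | hAx
  · suffices deriv (fun t => √(A t)) x = 0 by simpa [this]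
    by_cases hdiff : DifferentiableAt ℝ (fun t => √(A t)) x
    · refine IsLocalMin.deriv_eq_zero (Filter.Eventually.of_forall fun t => ?_)
      simp only [← hAx, Real.sqrt_zero, Real.sqrt_nonneg]
    · exact deriv_zero_of_not_differentiableAt hdiff
  · rw [(hD.sqrt hAx.ne').deriv, div_pow, mul_pow, Real.sq_sqrt hAx.le,
      div_le_iff₀ (by positivity)]
    linarith

namespace SchwartzMap

variable {E F : Type*} [NormedAddCommGroup E] [NormedSpace ℝ E] [NormedAddCommGroup F]
  [NormedSpace ℝ F]

theorem norm_le_mul_one_add_norm_rpow_neg (f : 𝓢(E, F)) (l : ℕ) (x : E) :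
    ‖f x‖ ≤ 2 ^ l * (SchwartzMap.seminorm ℝ 0 0 f + SchwartzMap.seminorm ℝ l 0 f)
      * (1 + ‖x‖) ^ (-(l : ℝ)) := by
  simpa using pow_mul_le_of_le_of_pow_mul_le (k := 0) (norm_nonneg x) (norm_nonneg _)
    (norm_le_seminorm ℝ f x) (by simpa using norm_pow_mul_le_seminorm ℝ f l x)

theorem integrable_norm_sq [MeasurableSpace E] [BorelSpace E] [SecondCountableTopology E]
    {μ : Measure E} [μ.HasTemperateGrowth] (f : 𝓢(E, F)) : Integrable (fun x => ‖f x‖ ^ 2) μ :=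
  (f.memLp (2 : ℕ) μ).integrable_norm_pow two_ne_zero

end SchwartzMap

section LastCoordinate

variable {m : ℕ} {F : Type*} [NormedAddCommGroup F] [NormedSpace ℝ F]

noncomputable def lastPartialDeriv (ψ : 𝓢(Fin (m + 1) → ℝ, F)) : 𝓢(Fin (m + 1) → ℝ, F) :=
  ∂_{(Pi.single (Fin.last m) 1 : Fin (m + 1) → ℝ)} ψ

theorem hasDerivAt_comp_finSnoc (ψ : 𝓢(Fin (m + 1) → ℝ, F)) (y : Fin m → ℝ) (t : ℝ) :
    HasDerivAt (fun s => ψ (Fin.snoc y s)) (lastPartialDeriv ψ (Fin.snoc y t)) t :=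
  (ψ.hasFDerivAt _).comp_hasDerivAt t (hasDerivAt_finSnoc y t)

theorem deriv_comp_update_last (ψ : 𝓢(Fin (m + 1) → ℝ, F)) (x : Fin (m + 1) → ℝ) :
    deriv (fun t => ψ (Function.update x (Fin.last m) t)) (x (Fin.last m))
      = lastPartialDeriv ψ x := by
  have h := (ψ.hasFDerivAt _).comp_hasDerivAt _ (hasDerivAt_update x (Fin.last m) (x (Fin.last m)))
  rw [Function.update_eq_self] at h
  exact h.deriv

theorem exists_integrable_bound_finSnoc (f g : 𝓢(Fin (m + 1) → ℝ, F)) :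
    ∃ b : (Fin m → ℝ) → ℝ, Integrable b ∧
      ∀ x y, ‖f (Fin.snoc y x)‖ * ‖g (Fin.snoc y x)‖ ≤ b y := by
  set C := 2 ^ (m + 1) * (SchwartzMap.seminorm ℝ 0 0 g + SchwartzMap.seminorm ℝ (m + 1) 0 g)
  refine ⟨fun y => SchwartzMap.seminorm ℝ 0 0 f * (C * (1 + ‖y‖) ^ (-((m + 1 : ℕ) : ℝ))),
    (integrable_one_add_norm (by simp)).const_mul _ |>.const_mul _, fun x y => ?_⟩
  refine mul_le_mul (SchwartzMap.norm_le_seminorm ℝ f _) ?_ (norm_nonneg _) (apply_nonneg _ _)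
  refine (g.norm_le_mul_one_add_norm_rpow_neg (m + 1) _).trans (mul_le_mul_of_nonneg_left ?_ ?_)
  · exact Real.rpow_le_rpow_of_nonpos (by positivity) (by gcongr; exact norm_le_norm_finSnoc y x)
      (by simp; linarith)
  · positivity

theorem integrable_norm_sq_comp_finSnoc (f : 𝓢(Fin (m + 1) → ℝ, F)) (x : ℝ) :
    Integrable (fun y : Fin m → ℝ => ‖f (Fin.snoc y x)‖ ^ 2) := by
  obtain ⟨b, hb, hfb⟩ := exists_integrable_bound_finSnoc f f
  refine hb.mono' ?_ (.of_forall fun y => ?_)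
  · exact ((f.continuous.comp (continuous_finSnoc_left x)).norm.pow 2).aestronglyMeasurable
  · simpa [sq] using hfb x y

end LastCoordinate

section LastCoordinateInner

open scoped RealInnerProductSpace

variable {m : ℕ} {F : Type*} [NormedAddCommGroup F] [InnerProductSpace ℝ F]

theorem hasDerivAt_integral_norm_sq_comp_finSnoc (ψ : 𝓢(Fin (m + 1) → ℝ, F)) (x₀ : ℝ) :
    Integrable (fun y : Fin m → ℝ => ⟪ψ (Fin.snoc y x₀), lastPartialDeriv ψ (Fin.snoc y x₀)⟫) ∧
    HasDerivAt (fun x => ∫ y : Fin m → ℝ, ‖ψ (Fin.snoc y x)‖ ^ 2)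
      (2 * ∫ y : Fin m → ℝ, ⟪ψ (Fin.snoc y x₀), lastPartialDeriv ψ (Fin.snoc y x₀)⟫) x₀ := by
  obtain ⟨b, hb, hψb⟩ := exists_integrable_bound_finSnoc ψ (lastPartialDeriv ψ)
  have hcont (f : 𝓢(Fin (m + 1) → ℝ, F)) (x : ℝ) :
      Continuous fun y : Fin m → ℝ => f (Fin.snoc y x) :=
    f.continuous.comp (continuous_finSnoc_left x)
  have hbound (y : Fin m → ℝ) (x : ℝ) :
      ‖2 * ⟪ψ (Fin.snoc y x), lastPartialDeriv ψ (Fin.snoc y x)⟫‖ ≤ 2 * b y := by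
    rw [norm_mul, Real.norm_two]
    exact mul_le_mul_of_nonneg_left ((norm_inner_le_norm _ _).trans (hψb x y)) zero_le_two
  obtain ⟨hint, hderiv⟩ := hasDerivAt_integral_of_dominated_loc_of_deriv_le
    (bound := fun y => 2 * b y) (Metric.ball_mem_nhds x₀ one_pos)
    (.of_forall fun x => ((hcont ψ x).norm.pow 2).aestronglyMeasurable)
    (integrable_norm_sq_comp_finSnoc ψ x₀)
    ((continuous_const.mul ((hcont ψ x₀).inner (hcont _ x₀))).aestronglyMeasurable)
    (.of_forall fun y x _ => hbound y x) (hb.const_mul 2)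
    (.of_forall fun y x _ => (hasDerivAt_comp_finSnoc ψ y x).norm_sq)
  refine ⟨(hint.const_mul 2⁻¹).congr (.of_forall fun y => ?_), ?_⟩
  · simp
  · rwa [integral_const_mul] at hderiv

end LastCoordinateInner

section Density

variable {m : ℕ}

theorem sq_deriv_sqrt_densityHO_le (ψ : 𝓢(Fin (m + 1) → ℝ, ℂ)) (x : ℝ) :
    deriv (fun t => √(densityHO m ψ t)) x ^ 2
      ≤ (m + 1) * ∫ y : Fin m → ℝ, ‖lastPartialDeriv ψ (Fin.snoc y x)‖ ^ 2 := by
  obtain ⟨hint, hderiv⟩ := hasDerivAt_integral_norm_sq_comp_finSnoc ψ x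
  have hCS := sq_integral_inner_le (integrable_norm_sq_comp_finSnoc ψ x)
    (integrable_norm_sq_comp_finSnoc (lastPartialDeriv ψ) x) hint
  refine sq_deriv_sqrt_le (fun t => by unfold densityHO; positivity) (hderiv.const_mul _)
    (by positivity) ?_
  unfold densityHO
  nlinarith [sq_nonneg ((m : ℝ) + 1)]

theorem integral_sq_deriv_sqrt_densityHO_le (ψ : 𝓢(Fin (m + 1) → ℝ, ℂ)) :
    ∫ x, deriv (fun t => √(densityHO m ψ t)) x ^ 2
      ≤ ∫ x, (m + 1) * ∫ y : Fin m → ℝ, ‖lastPartialDeriv ψ (Fin.snoc y x)‖ ^ 2 :=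
  integral_mono_of_nonneg (.of_forall fun _ => sq_nonneg _)
    ((integrable_finSnoc_prod (lastPartialDeriv ψ).integrable_norm_sq).integral_prod_left
      |>.const_mul _)
    (.of_forall (sq_deriv_sqrt_densityHO_le ψ))

theorem kineticHO_eq_integral_lastPartialDeriv (ψ : 𝓢(Fin (m + 1) → ℝ, ℂ))
    (hsymm : ∀ (p : Equiv.Perm (Fin (m + 1))) (x : Fin (m + 1) → ℝ), ψ (x ∘ p) = ψ x) :
    kineticHO m ψ = ∫ x, (m + 1) * ∫ y : Fin m → ℝ, ‖lastPartialDeriv ψ (Fin.snoc y x)‖ ^ 2 := by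
  simp only [kineticHO_eq_of_symm hsymm, deriv_comp_update_last, integral_const_mul]
  rw [integral_eq_integral_integral_finSnoc (lastPartialDeriv ψ).integrable_norm_sq]

end Density

section ProductState

variable {m : ℕ} {φ : ℝ → ℝ}

theorem prod_ofReal_finSnoc (y : Fin m → ℝ) (t : ℝ) :
    ∏ i, (φ ((Fin.snoc y t : Fin (m + 1) → ℝ) i) : ℂ) = (∏ j, (φ (y j) : ℂ)) * φ t := by
  simp [Fin.prod_univ_castSucc]

theorem differentiable_of_forall_eq_prod {ψ : (Fin (m + 1) → ℝ) → ℂ} (hψ : Differentiable ℝ ψ)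
    (h : ∀ x, ψ x = ∏ i, (φ (x i) : ℂ)) : Differentiable ℝ φ := by
  by_cases hφ : ∃ a, φ a ≠ 0
  · obtain ⟨a, ha⟩ := hφ
    have hφ_eq : φ = fun t => (ψ (Fin.snoc (fun _ => a) t)).re / φ a ^ m := by
      funext t
      rw [h, prod_ofReal_finSnoc, Finset.prod_const, Finset.card_univ, Fintype.card_fin,
        ← Complex.ofReal_pow, ← Complex.ofReal_mul, Complex.ofReal_re]
      field_simp
    rw [hφ_eq]
    exact fun t => ((Complex.reCLM.differentiableAt.comp t
      (hψ.differentiableAt.comp t (hasDerivAt_finSnoc _ t).differentiableAt)).div_const _)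
  · push Not at hφ
    rw [funext hφ]
    exact differentiable_const 0

theorem integral_norm_sq_prod_mul (z : ℂ) :
    ∫ y : Fin m → ℝ, ‖(∏ j, (φ (y j) : ℂ)) * z‖ ^ 2 = (∫ t, φ t ^ 2) ^ m * ‖z‖ ^ 2 := by
  simp only [norm_mul, norm_prod, Complex.norm_real, Real.norm_eq_abs, mul_pow,
    ← Finset.prod_pow, sq_abs]
  rw [integral_mul_const, integral_fintype_prod_volume_eq_pow (fun t => φ t ^ 2), Fintype.card_fin]

theorem sq_deriv_sqrt_densityHO_of_forall_eq_prod (ψ : 𝓢(Fin (m + 1) → ℝ, ℂ))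
    (hφ0 : ∀ t, 0 ≤ φ t) (hφ : Differentiable ℝ φ) (h : ∀ x, ψ x = ∏ i, (φ (x i) : ℂ)) (x : ℝ) :
    deriv (fun t => √(densityHO m ψ t)) x ^ 2
      = (m + 1) * ∫ y : Fin m → ℝ, ‖lastPartialDeriv ψ (Fin.snoc y x)‖ ^ 2 := by
  set c := ∫ t, φ t ^ 2
  have hsnoc (y : Fin m → ℝ) (t : ℝ) : ψ (Fin.snoc y t) = (∏ j, (φ (y j) : ℂ)) * φ t := by
    rw [h, prod_ofReal_finSnoc]
  have hpartial (y : Fin m → ℝ) :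
      lastPartialDeriv ψ (Fin.snoc y x) = (∏ j, (φ (y j) : ℂ)) * ((deriv φ x : ℝ) : ℂ) :=
    (hasDerivAt_comp_finSnoc ψ y x).unique <| by
      simpa only [hsnoc] using ((hφ x).hasDerivAt.ofReal_comp).const_mul (∏ j, (φ (y j) : ℂ))
  have hdensity : (fun t => √(densityHO m ψ t)) = fun t => √((m + 1) * c ^ m) * φ t := by
    funext t
    rw [densityHO]
    simp only [hsnoc, integral_norm_sq_prod_mul, Complex.norm_real, Real.norm_eq_abs, sq_abs]
    rw [← mul_assoc, Real.sqrt_mul (by positivity), Real.sqrt_sq (hφ0 t)]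
  simp only [hpartial, integral_norm_sq_prod_mul, hdensity, deriv_const_mul _ (hφ x),
    Complex.norm_real, Real.norm_eq_abs, sq_abs]
  rw [mul_pow, Real.sq_sqrt (by positivity)]
  ring

end ProductState

theorem hoffmannOstenhof_one_dim_general (m : ℕ) (ψ : SchwartzMap (Fin (m + 1) → ℝ) ℂ)
    (hsymm : ∀ (p : Equiv.Perm (Fin (m + 1))) (x : Fin (m + 1) → ℝ),
      ψ (x ∘ p) = ψ x) :
    (∫ x : ℝ, (deriv (fun y : ℝ => Real.sqrt (densityHO m (fun z => ψ z) y)) x) ^ 2)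
      ≤ kineticHO m (fun z => ψ z) ∧
    ((∀ x : Fin (m + 1) → ℝ, ψ x = ∏ i : Fin (m + 1),
        (Real.sqrt (densityHO m (fun z => ψ z) (x i) / (m + 1 : ℝ)) : ℂ)) →
      kineticHO m (fun z => ψ z)
        = ∫ x : ℝ, (deriv (fun y : ℝ =>
            Real.sqrt (densityHO m (fun z => ψ z) y)) x) ^ 2) := by
  rw [kineticHO_eq_integral_lastPartialDeriv ψ hsymm]
  refine ⟨integral_sq_deriv_sqrt_densityHO_le ψ, fun hprod => ?_⟩
  have hφ := differentiable_of_forall_eq_prod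
    (φ := fun t => √(densityHO m ψ t / (m + 1))) ψ.differentiable hprod
  exact integral_congr_ae (.of_forall fun x =>
    (sq_deriv_sqrt_densityHO_of_forall_eq_prod ψ (fun _ => Real.sqrt_nonneg _) hφ hprod x).symm)

/-- Hoffmann-Ostenhof inequality in one dimension: for a smooth rapidly decaying
symmetric normalized `q`-particle wave function (`q = m+1`), the kinetic energy
dominates the kinetic energy of `√ρ_ψ`; equality holds for the product state
`ψ = ∏ᵢ φ(xᵢ)` with `φ = √(ρ_ψ/q)`. -/
theorem hoffmannOstenhof_one_dim (m : ℕ) (ψ : SchwartzMap (Fin (m + 1) → ℝ) ℂ)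
    (hsymm : ∀ (p : Equiv.Perm (Fin (m + 1))) (x : Fin (m + 1) → ℝ),
      ψ (x ∘ p) = ψ x)
    (hnorm : ∫ x : Fin (m + 1) → ℝ, ‖ψ x‖ ^ 2 = 1) :
    (∫ x : ℝ, (deriv (fun y : ℝ => Real.sqrt (densityHO m (fun z => ψ z) y)) x) ^ 2)
      ≤ kineticHO m (fun z => ψ z) ∧
    ((∀ x : Fin (m + 1) → ℝ, ψ x = ∏ i : Fin (m + 1),
        (Real.sqrt (densityHO m (fun z => ψ z) (x i) / (m + 1 : ℝ)) : ℂ)) →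
      kineticHO m (fun z => ψ z)
        = ∫ x : ℝ, (deriv (fun y : ℝ =>
            Real.sqrt (densityHO m (fun z => ψ z) y)) x) ^ 2) :=
  hoffmannOstenhof_one_dim_general m ψ hsymm
end
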